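/- arXiv:2302.12099 — 3 statements merged into one kernel-verified Lean document; each statement's English description precedes it below -/
import Mathlib

section
/- Let f : [0,∞) → [0,1] be Lipschitz, nonincreasing, with support [0,1], and let v ∈ W^{2,∞}(ℝ) with γ := ‖v'‖_∞. Let (ω_1,…,ω_N) solve the ODE system ω̇_i = N²[2f(ω_i) − f(ω_{i−1}) − f(ω_{i+1})] + N(v(x_i) − v(x_{i−1})) (with the boundary modifications dropping the missing neighbor terms), with nonnegative initial data. Then for all t ≥ 0 and all 1 ≤ i ≤ N, ω_min e^{−γt} ≤ ω_i(t) ≤ ω_max e^{γt}, where ω_min := min_j ω_{j,0} and ω_max := max{1, max_j ω_{j,0}}. -/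
/-!
A first-touching argument against exponential barriers. At a site of minimal gap, `f` being
nonincreasing makes the interaction term `2 f(ω_i) - f(ω_{i-1}) - f(ω_{i+1})` nonnegative, so
`ω_i` can only decrease through the velocity term `N (v(x_i) - v(x_{i-1}))`, which is at most
`γ |ω_i|` in size because `v` is `γ`-Lipschitz; hence no gap can cross `m e^{-γt} - ε e^{Kt}`.
At a site with gap at least `1`, `f(ω_i) = 0` and the neighbouring gaps are nonnegative, so the
interaction term is nonpositive and no gap can cross `M e^{γt} + ε e^{(γ+1)t}`. Let `ε → 0`.
-/

open Topology Set
open scoped NNReal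

theorem HasDerivAt.nonpos_of_eventually_nhdsLT_le {g : ℝ → ℝ} {d t : ℝ} (hd : HasDerivAt g d t)
    (hle : ∀ᶠ u in 𝓝[<] t, g t ≤ g u) : d ≤ 0 := by
  refine le_of_tendsto (hasDerivAt_iff_tendsto_slope_left_right.1 hd).1 ?_
  filter_upwards [hle, self_mem_nhdsWithin] with u hgu hut
  rw [slope_def_field]
  exact div_nonpos_of_nonneg_of_nonpos (sub_nonneg.2 hgu) (sub_nonpos.2 hut.le)

theorem forall_pos_of_hasDerivAt_pos_of_eq_zero {ι : Type*} {s : Finset ι} {g : ι → ℝ → ℝ}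
    (hc : ∀ i ∈ s, ContinuousOn (g i) (Ici 0)) (h0 : ∀ i ∈ s, 0 < g i 0)
    (hzero : ∀ t, 0 < t → (∀ j ∈ s, 0 ≤ g j t) → ∀ i ∈ s, g i t = 0 →
      ∃ d, HasDerivAt (g i) d t ∧ 0 < d) :
    ∀ t, 0 ≤ t → ∀ i ∈ s, 0 < g i t := by
  by_contra! ⟨t₀, ht₀, i₀, hi₀, hg₀⟩
  set T := ⋃ i ∈ s, Ici 0 ∩ g i ⁻¹' Iic 0
  have hmemT {u : ℝ} : u ∈ T ↔ 0 ≤ u ∧ ∃ i ∈ s, g i u ≤ 0 := by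
    simp only [T, mem_iUnion, mem_inter_iff, mem_Ici, mem_preimage, mem_Iic, exists_prop]
    tauto
  have hTbdd : BddBelow T := ⟨0, fun u hu => (hmemT.1 hu).1⟩
  have hTclosed : IsClosed T := isClosed_biUnion_finset fun i hi =>
    (hc i hi).preimage_isClosed_of_isClosed isClosed_Ici isClosed_Iic
  set t₁ := sInf T
  obtain ⟨ht₁, i, hi, hgi⟩ := hmemT.1 (hTclosed.csInf_mem ⟨t₀, hmemT.2 ⟨ht₀, i₀, hi₀, hg₀⟩⟩ hTbdd)
  have hbefore : ∀ u, 0 ≤ u → u < t₁ → ∀ j ∈ s, 0 < g j u := fun u hu hut j hj => by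
    by_contra! hgj
    exact (csInf_le hTbdd (hmemT.2 ⟨hu, j, hj, hgj⟩)).not_gt hut
  have ht₁pos : 0 < t₁ := ht₁.lt_of_ne fun h => (h0 i hi).not_ge (h ▸ hgi)
  have hleft : ∀ᶠ u in 𝓝[<] t₁, ∀ j ∈ s, 0 < g j u := by
    filter_upwards [Ioo_mem_nhdsLT ht₁pos] with u hu using hbefore u hu.1.le hu.2
  have hnonneg : ∀ j ∈ s, 0 ≤ g j t₁ := fun j hj =>
    ge_of_tendsto (((hc j hj).continuousAt (Ici_mem_nhds ht₁pos)).tendsto.mono_left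
      nhdsWithin_le_nhds) (hleft.mono fun u hu => (hu j hj).le)
  have hzero₁ : g i t₁ = 0 := le_antisymm hgi (hnonneg i hi)
  obtain ⟨d, hd, hdpos⟩ := hzero t₁ ht₁pos hnonneg i hi hzero₁
  refine hdpos.not_ge (hd.nonpos_of_eventually_nhdsLT_le ?_)
  filter_upwards [hleft] with u hu
  exact hzero₁ ▸ (hu i hi).le

section Interaction

variable {f : ℝ → ℝ} {L : ℝ≥0}

theorem LipschitzWith.le_add_mul_abs_sub (hf : LipschitzWith L f) (x y : ℝ) :
    f x ≤ f y + L * |x - y| := by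
  have := hf.norm_sub_le x y
  rw [Real.norm_eq_abs, Real.norm_eq_abs] at this
  linarith [le_abs_self (f x - f y)]

theorem LipschitzWith.le_add_mul_negPart_of_le (hf : LipschitzWith L f)
    (hf_anti : AntitoneOn f (Ici 0)) {a b : ℝ} (hab : a ≤ b) : f b ≤ f a + L * a⁻ := by
  rcases le_total 0 a with ha | ha
  · rw [negPart_eq_zero.2 ha, mul_zero, add_zero]
    exact hf_anti ha (ha.trans hab) hab
  have hb : f b ≤ f (min b 0) := by
    rcases le_total b 0 with hb | hb
    · rw [min_eq_left hb]
    · rw [min_eq_right hb]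
      exact hf_anti self_mem_Ici hb hb
  calc f b ≤ f (min b 0) := hb
    _ ≤ f a + L * |min b 0 - a| := hf.le_add_mul_abs_sub _ _
    _ ≤ f a + L * a⁻ := by
      rw [negPart_eq_neg.2 ha, abs_of_nonneg (by simpa using ⟨hab, ha⟩)]
      gcongr
      linarith [min_le_right b 0]

theorem LipschitzWith.neg_mul_negPart_le (hf : LipschitzWith L f)
    (hf_nonneg : ∀ r, 0 ≤ r → 0 ≤ f r) (a : ℝ) : -(L * a⁻) ≤ f a := by
  rcases le_total 0 a with ha | ha
  · rw [negPart_eq_zero.2 ha, mul_zero, neg_zero]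
    exact hf_nonneg a ha
  · have := hf.le_add_mul_abs_sub 0 a
    rw [zero_sub, abs_neg, abs_of_nonpos ha] at this
    rw [negPart_eq_neg.2 ha]
    linarith [hf_nonneg 0 le_rfl]

theorem LipschitzWith.neg_two_mul_negPart_le_two_mul_sub_sum (hf : LipschitzWith L f)
    (hf_anti : AntitoneOn f (Ici 0)) (hf_nonneg : ∀ r, 0 ≤ r → 0 ≤ f r)
    {ι : Type*} {S : Finset ι} (hS : S.card ≤ 2) {w : ι → ℝ} {a : ℝ} (hmin : ∀ j ∈ S, a ≤ w j) :
    -(2 * L * a⁻) ≤ 2 * f a - ∑ j ∈ S, f (w j) := by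
  have hsum : ∑ j ∈ S, f (w j) ≤ S.card • (f a + L * a⁻) :=
    Finset.sum_le_card_nsmul _ _ _ fun j hj => hf.le_add_mul_negPart_of_le hf_anti (hmin j hj)
  have hnonneg : 0 ≤ f a + L * a⁻ := by linarith [hf.neg_mul_negPart_le hf_nonneg a]
  have hcard : (S.card : ℝ) * (f a + L * a⁻) ≤ 2 * (f a + L * a⁻) :=
    mul_le_mul_of_nonneg_right (by exact_mod_cast hS) hnonneg
  rw [nsmul_eq_mul] at hsum
  linarith

end Interaction

theorem LipschitzWith.abs_mul_sub_le {v : ℝ → ℝ} {γ : ℝ≥0} (hv : LipschitzWith γ v) (c a b : ℝ) :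
    |c * (v a - v b)| ≤ γ * |c * (a - b)| := by
  have := hv.norm_sub_le a b
  rw [Real.norm_eq_abs, Real.norm_eq_abs] at this
  rw [abs_mul, abs_mul, mul_left_comm]
  exact mul_le_mul_of_nonneg_left this (abs_nonneg c)

theorem le_of_forall_pos_lt_add_mul {a b c : ℝ} (hc : 0 < c) (h : ∀ ε, 0 < ε → a < b + ε * c) :
    a ≤ b :=
  le_of_forall_pos_lt_add fun δ hδ => by
    simpa [div_mul_cancel₀ δ hc.ne'] using h (δ / c) (div_pos hδ hc)

theorem hasDerivAt_exp_mul (c t : ℝ) :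
    HasDerivAt (fun s => Real.exp (c * s)) (c * Real.exp (c * t)) t := by
  simpa [mul_comm] using ((hasDerivAt_id t).const_mul c).exp

section Chain

variable {ι : Type*} {s : Finset ι} {nbr : ι → Finset ι} {f : ℝ → ℝ} {κ γ : ℝ} {ω V : ι → ℝ → ℝ}

theorem mul_exp_neg_le_of_chain_ode (hκ : 0 ≤ κ) (hγ : 0 ≤ γ) {L : ℝ≥0} (hf_lip : LipschitzWith L f)
    (hf_anti : AntitoneOn f (Ici 0)) (hf_nonneg : ∀ r, 0 ≤ r → 0 ≤ f r)
    (hnbr : ∀ i ∈ s, nbr i ⊆ s) (hcard : ∀ i ∈ s, (nbr i).card ≤ 2)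
    (hode : ∀ i ∈ s, ∀ t, 0 ≤ t →
      HasDerivAt (ω i) (κ * (2 * f (ω i t) - ∑ j ∈ nbr i, f (ω j t)) + V i t) t)
    (hV : ∀ i ∈ s, ∀ t, |V i t| ≤ γ * |ω i t|) {m : ℝ} (hm : 0 ≤ m)
    (hm0 : ∀ i ∈ s, m ≤ ω i 0) :
    ∀ t, 0 ≤ t → ∀ i ∈ s, m * Real.exp (-γ * t) ≤ ω i t := by
  intro t ht i hi
  set K := γ + 2 * κ * L + 1 with hK
  refine le_of_forall_pos_lt_add_mul (Real.exp_pos (K * t)) fun ε hε => ?_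
  -- The barrier `m e^{-γt} - ε e^{Kt}` may go negative, where `f` is only controlled through `L`;
  -- the rate `K` absorbs that error.
  set b := fun t => m * Real.exp (-γ * t) - ε * Real.exp (K * t)
  suffices ∀ t, 0 ≤ t → ∀ i ∈ s, 0 < ω i t - b t by linarith [this t ht i hi]
  have hcont : ∀ i ∈ s, ContinuousOn (ω i) (Ici 0) := fun i hi t ht =>
    (hode i hi t ht).continuousAt.continuousWithinAt
  refine forall_pos_of_hasDerivAt_pos_of_eq_zero (fun i hi => (hcont i hi).sub (by fun_prop))
    (fun i hi => by simp [b]; linarith [hm0 i hi]) ?_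
  intro t ht hnonneg i hi hzero
  have hb : HasDerivAt b (m * (-γ * Real.exp (-γ * t)) - ε * (K * Real.exp (K * t))) t :=
    ((hasDerivAt_exp_mul _ t).const_mul m).sub ((hasDerivAt_exp_mul _ t).const_mul ε)
  refine ⟨_, (hode i hi t ht.le).sub hb, ?_⟩
  have hmin : ∀ j ∈ nbr i, ω i t ≤ ω j t := fun j hj => by
    linarith [hnonneg j (hnbr i hi hj)]
  set E₁ := Real.exp (-γ * t)
  set E₂ := Real.exp (K * t)
  have hmE₁ : 0 ≤ m * E₁ := mul_nonneg hm (Real.exp_pos _).le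
  have hεE₂ : 0 < ε * E₂ := mul_pos hε (Real.exp_pos _)
  have hωb : ω i t = m * E₁ - ε * E₂ := by linarith
  have hneg : (ω i t)⁻ ≤ ε * E₂ := sup_le (by linarith) hεE₂.le
  have habs : |ω i t| ≤ m * E₁ + ε * E₂ := abs_le.2 ⟨by linarith, by linarith⟩
  have hint : -(κ * (2 * L * (ε * E₂))) ≤ κ * (2 * f (ω i t) - ∑ j ∈ nbr i, f (ω j t)) := by
    rw [← mul_neg]
    gcongr
    exact le_trans (by gcongr) (hf_lip.neg_two_mul_negPart_le_two_mul_sub_sum hf_anti hf_nonneg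
      (hcard i hi) hmin)
  have hVge : -(γ * (m * E₁ + ε * E₂)) ≤ V i t := by
    linarith [neg_abs_le (V i t), hV i hi t, mul_le_mul_of_nonneg_left habs hγ]
  rw [hK]
  linarith

theorem le_mul_exp_of_chain_ode (hκ : 0 ≤ κ) (hγ : 0 ≤ γ) (hf_nonneg : ∀ r, 0 ≤ r → 0 ≤ f r)
    (hf_supp : ∀ r, 1 ≤ r → f r = 0) (hnbr : ∀ i ∈ s, nbr i ⊆ s)
    (hode : ∀ i ∈ s, ∀ t, 0 ≤ t →
      HasDerivAt (ω i) (κ * (2 * f (ω i t) - ∑ j ∈ nbr i, f (ω j t)) + V i t) t)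
    (hV : ∀ i ∈ s, ∀ t, |V i t| ≤ γ * |ω i t|) (hω : ∀ t, 0 ≤ t → ∀ i ∈ s, 0 ≤ ω i t)
    {M : ℝ} (hM : 1 ≤ M) (hM0 : ∀ i ∈ s, ω i 0 ≤ M) :
    ∀ t, 0 ≤ t → ∀ i ∈ s, ω i t ≤ M * Real.exp (γ * t) := by
  intro t ht i hi
  refine le_of_forall_pos_lt_add_mul (Real.exp_pos ((γ + 1) * t)) fun ε hε => ?_
  set b := fun t => M * Real.exp (γ * t) + ε * Real.exp ((γ + 1) * t)
  suffices ∀ t, 0 ≤ t → ∀ i ∈ s, 0 < b t - ω i t by linarith [this t ht i hi]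
  have hcont : ∀ i ∈ s, ContinuousOn (ω i) (Ici 0) := fun i hi t ht =>
    (hode i hi t ht).continuousAt.continuousWithinAt
  refine forall_pos_of_hasDerivAt_pos_of_eq_zero
    (fun i hi => (by fun_prop : ContinuousOn b (Ici 0)).sub (hcont i hi))
    (fun i hi => by simp [b]; linarith [hM0 i hi]) ?_
  intro t ht _ i hi hzero
  have hb : HasDerivAt b (M * (γ * Real.exp (γ * t)) + ε * ((γ + 1) * Real.exp ((γ + 1) * t))) t :=
    ((hasDerivAt_exp_mul _ t).const_mul M).add ((hasDerivAt_exp_mul _ t).const_mul ε)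
  refine ⟨_, hb.sub (hode i hi t ht.le), ?_⟩
  set E₁ := Real.exp (γ * t)
  set E₂ := Real.exp ((γ + 1) * t)
  have hE₁ : 1 ≤ E₁ := Real.one_le_exp (by positivity)
  have hεE₂ : 0 < ε * E₂ := mul_pos hε (Real.exp_pos _)
  have hωb : ω i t = M * E₁ + ε * E₂ := by linarith
  have hfω : f (ω i t) = 0 := hf_supp _ (by nlinarith)
  have hsum : 0 ≤ ∑ j ∈ nbr i, f (ω j t) :=
    Finset.sum_nonneg fun j hj => hf_nonneg _ (hω t ht.le j (hnbr i hi hj))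
  have hVle : V i t ≤ γ * (M * E₁ + ε * E₂) := by
    rw [← hωb, ← abs_of_nonneg (hω t ht.le i hi)]
    exact (le_abs_self _).trans (hV i hi t)
  rw [hfω]
  linarith [mul_nonneg hκ hsum]

end Chain

def chainNeighbors (N i : ℕ) : Finset ℕ := {i - 1, i + 1} ∩ Finset.Icc 1 N

theorem chainNeighbors_subset (N i : ℕ) : chainNeighbors N i ⊆ Finset.Icc 1 N :=
  Finset.inter_subset_right

theorem card_chainNeighbors_le (N i : ℕ) : (chainNeighbors N i).card ≤ 2 :=
  (Finset.card_le_card Finset.inter_subset_left).trans (Finset.card_le_two)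

theorem hasDerivAt_chainNeighbors {N : ℕ} (hN : 2 ≤ N) {κ : ℝ} {F : ℝ → ℝ} {ω V : ℕ → ℝ → ℝ}
    (hint : ∀ i, 2 ≤ i → i ≤ N - 1 → ∀ t : ℝ, 0 ≤ t →
      HasDerivAt (ω i) (κ * (2 * F (ω i t) - F (ω (i - 1) t) - F (ω (i + 1) t)) + V i t) t)
    (hleft : ∀ t : ℝ, 0 ≤ t → HasDerivAt (ω 1) (κ * (2 * F (ω 1 t) - F (ω 2 t)) + V 1 t) t)
    (hright : ∀ t : ℝ, 0 ≤ t →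
      HasDerivAt (ω N) (κ * (2 * F (ω N t) - F (ω (N - 1) t)) + V N t) t) :
    ∀ i ∈ Finset.Icc 1 N, ∀ t : ℝ, 0 ≤ t → HasDerivAt (ω i)
      (κ * (2 * F (ω i t) - ∑ j ∈ chainNeighbors N i, F (ω j t)) + V i t) t := by
  intro i hi t ht
  rw [Finset.mem_Icc] at hi
  rcases (by omega : i = 1 ∨ i = N ∨ 2 ≤ i ∧ i ≤ N - 1) with rfl | rfl | ⟨h₂, h₃⟩
  · have : chainNeighbors N 1 = {2} := by ext j; simp [chainNeighbors]; omega
    simpa [this] using hleft t ht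
  · have : chainNeighbors i i = {i - 1} := by ext j; simp [chainNeighbors]; omega
    simpa [this] using hright t ht
  · have : chainNeighbors N i = {i - 1, i + 1} := by ext j; simp [chainNeighbors]; omega
    simpa [this, Finset.sum_pair (by omega : i - 1 ≠ i + 1), sub_sub] using hint i h₂ h₃ t ht

/-- Min-max principle for the scaled gaps of the particle chain:
`ω_min e^{-γt} ≤ ω_i(t) ≤ ω_max e^{γt}`. -/
theorem min_max_principle
    (N : ℕ) (hN : 2 ≤ N)
    (f v : ℝ → ℝ) (Lf γ : ℝ≥0)
    (hf_lip : LipschitzWith Lf f)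
    (hf_anti : AntitoneOn f (Set.Ici 0))
    (hf_range : ∀ r : ℝ, 0 ≤ r → f r ∈ Set.Icc (0:ℝ) 1)
    (hf_supp : ∀ r : ℝ, 1 ≤ r → f r = 0)
    (hv_lip : LipschitzWith γ v)
    (ω x : ℕ → ℝ → ℝ)
    (hω0 : ∀ i ∈ Finset.Icc 1 N, 0 ≤ ω i 0)
    (hgap : ∀ i ∈ Finset.Icc 1 N, ∀ t : ℝ, ω i t = (N : ℝ) * (x i t - x (i-1) t))
    (hode_int : ∀ i, 2 ≤ i → i ≤ N - 1 → ∀ t : ℝ, 0 ≤ t →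
      HasDerivAt (ω i)
        ((N:ℝ)^2 * (2 * f (ω i t) - f (ω (i-1) t) - f (ω (i+1) t))
          + (N:ℝ) * (v (x i t) - v (x (i-1) t))) t)
    (hode_left : ∀ t : ℝ, 0 ≤ t →
      HasDerivAt (ω 1)
        ((N:ℝ)^2 * (2 * f (ω 1 t) - f (ω 2 t))
          + (N:ℝ) * (v (x 1 t) - v (x 0 t))) t)
    (hode_right : ∀ t : ℝ, 0 ≤ t →
      HasDerivAt (ω N)
        ((N:ℝ)^2 * (2 * f (ω N t) - f (ω (N-1) t))
          + (N:ℝ) * (v (x N t) - v (x (N-1) t))) t) :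
    ∀ t : ℝ, 0 ≤ t → ∀ i ∈ Finset.Icc 1 N,
      ((Finset.Icc 1 N).inf' (Finset.nonempty_Icc.mpr (by omega)) (fun j => ω j 0))
          * Real.exp (-(γ:ℝ) * t) ≤ ω i t
      ∧ ω i t ≤
        (max 1 ((Finset.Icc 1 N).sup' (Finset.nonempty_Icc.mpr (by omega)) (fun j => ω j 0)))
          * Real.exp ((γ:ℝ) * t) := by
  have hode := hasDerivAt_chainNeighbors hN
    (V := fun i t => (N : ℝ) * (v (x i t) - v (x (i - 1) t))) hode_int hode_left hode_right
  have hV : ∀ i ∈ Finset.Icc 1 N, ∀ t, |(N : ℝ) * (v (x i t) - v (x (i - 1) t))| ≤ γ * |ω i t| :=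
    fun i hi t => hgap i hi t ▸ hv_lip.abs_mul_sub_le _ _ _
  have hf_nonneg : ∀ r, 0 ≤ r → 0 ≤ f r := fun r hr => (hf_range r hr).1
  have hnbr : ∀ i ∈ Finset.Icc 1 N, chainNeighbors N i ⊆ Finset.Icc 1 N :=
    fun i _ => chainNeighbors_subset N i
  have hne : (Finset.Icc 1 N).Nonempty := Finset.nonempty_Icc.mpr (by omega)
  have hm : 0 ≤ (Finset.Icc 1 N).inf' hne (fun j => ω j 0) := Finset.le_inf' _ _ hω0
  have hlow := mul_exp_neg_le_of_chain_ode (sq_nonneg (N : ℝ)) γ.2 hf_lip hf_anti hf_nonneg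
    hnbr (fun i _ => card_chainNeighbors_le N i) hode hV hm (fun i hi => Finset.inf'_le _ hi)
  have hω : ∀ t, 0 ≤ t → ∀ i ∈ Finset.Icc 1 N, 0 ≤ ω i t := fun t ht i hi =>
    (mul_nonneg hm (Real.exp_pos _).le).trans (hlow t ht i hi)
  have hup := le_mul_exp_of_chain_ode (sq_nonneg (N : ℝ)) γ.2 hf_nonneg hf_supp hnbr hode hV hω
    (le_max_left 1 ((Finset.Icc 1 N).sup' hne fun j => ω j 0))
    (fun i hi => (Finset.le_sup' (fun j => ω j 0) hi).trans (le_max_right _ _))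
  exact fun t ht i hi => ⟨hlow t ht i hi, hup t ht i hi⟩
end

section
/- Under the assumptions of the previous ODE system, if v ≡ 0 then the center of mass x̄(t) is constant in time, and the variance V_x(t) := (1/N)∑_{i=0}^N (x_i − x̄)² is nondecreasing in time, with dV_x/dt = (2/N)∑_{i=1}^N f(ω_i) ω_i ≥ 0, where ω_i := N(x_i − x_{i−1}). -/
/-!
Write the system in conservation form `ẋ_i = g_i - g_{i+1}`, where `g_i = N f(ω_i)` is the flux
through the `i`-th gap and `g_0 = g_{N+1} = 0`. The velocities then telescope to zero, so the
center of mass is conserved. Since the mean is constant, `dV/dt = (2/N) ∑ x_i ẋ_i`, and summation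
by parts turns `∑ x_i (g_i - g_{i+1})` into `∑ g_i (x_i - x_{i-1}) = ∑ f(ω_i) ω_i`, which is
nonnegative because `f ≥ 0` and the particles stay ordered.
-/

open Finset

lemma sum_range_mul_sub_succ_eq_sum_Icc (u g : ℕ → ℝ) (hg : g 0 = 0) (n : ℕ) :
    ∑ i ∈ range (n + 1), u i * (g i - g (i + 1))
      = ∑ i ∈ Icc 1 n, g i * (u i - u (i - 1)) - u n * g (n + 1) := by
  induction n with
  | zero => simp [hg]
  | succ n ih =>
    rw [sum_range_succ, ih, sum_Icc_succ_top (by omega), Nat.add_sub_cancel]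
    ring

lemma hasDerivAt_sum_sq_sub_mean {ι : Type*} (s : Finset ι) (x : ι → ℝ → ℝ) (v : ι → ℝ)
    (c t : ℝ) (hx : ∀ i ∈ s, HasDerivAt (x i) (v i) t) (hv : ∑ i ∈ s, v i = 0) :
    HasDerivAt (fun τ => ∑ i ∈ s, (x i τ - c * ∑ j ∈ s, x j τ) ^ 2)
      (2 * ∑ i ∈ s, x i t * v i) t := by
  have hmean : HasDerivAt (fun τ => c * ∑ j ∈ s, x j τ) 0 t := by
    simpa [hv] using (HasDerivAt.fun_sum hx).const_mul c
  have hterm : ∀ i ∈ s, HasDerivAt (fun τ => (x i τ - c * ∑ j ∈ s, x j τ) ^ 2)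
      (2 * (x i t - c * ∑ j ∈ s, x j t) * v i) t := fun i hi => by
    simpa using ((hx i hi).fun_sub hmean).fun_pow 2
  refine (HasDerivAt.fun_sum hterm).congr_deriv ?_
  simp only [mul_assoc, sub_mul, mul_sub, sum_sub_distrib, ← mul_sum, hv]
  ring

/-- Flux through the gap to the left of particle `i`. It vanishes for `i = 0` and `i = N + 1`,
which turns the one-sided equations at the ends into the interior form `ẋ_i = g_i - g_{i+1}`. -/
noncomputable def gapFlux (N : ℕ) (f : ℝ → ℝ) (y : ℕ → ℝ) (i : ℕ) : ℝ :=
  if 1 ≤ i ∧ i ≤ N then N * f (N * (y i - y (i - 1))) else 0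

section gapFlux

variable {N : ℕ} {f : ℝ → ℝ} {y : ℕ → ℝ}

@[simp] lemma gapFlux_zero : gapFlux N f y 0 = 0 := by simp [gapFlux]

@[simp] lemma gapFlux_succ_self : gapFlux N f y (N + 1) = 0 := by simp [gapFlux]

lemma gapFlux_of_mem_Icc {i : ℕ} (hi : i ∈ Icc 1 N) :
    gapFlux N f y i = N * f (N * (y i - y (i - 1))) := by
  simp [gapFlux, (mem_Icc.mp hi).1, (mem_Icc.mp hi).2]

lemma sum_range_gapFlux_sub :
    ∑ i ∈ range (N + 1), (gapFlux N f y i - gapFlux N f y (i + 1)) = 0 := by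
  rw [sum_range_sub', gapFlux_zero, gapFlux_succ_self, sub_self]

lemma sum_range_mul_gapFlux_sub :
    ∑ i ∈ range (N + 1), y i * (gapFlux N f y i - gapFlux N f y (i + 1))
      = ∑ i ∈ Icc 1 N, f (N * (y i - y (i - 1))) * (N * (y i - y (i - 1))) := by
  rw [sum_range_mul_sub_succ_eq_sum_Icc _ _ gapFlux_zero, gapFlux_succ_self, mul_zero, sub_zero]
  refine sum_congr rfl fun i hi => ?_
  rw [gapFlux_of_mem_Icc hi]
  ring

end gapFlux

lemma hasDerivAt_gapFlux_sub {N : ℕ} (hN : 1 ≤ N) {f : ℝ → ℝ} {x : ℕ → ℝ → ℝ} {t : ℝ}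
    (hode_left : HasDerivAt (x 0) (-(N:ℝ) * f ((N:ℝ) * (x 1 t - x 0 t))) t)
    (hode_int : ∀ i, 1 ≤ i → i ≤ N - 1 → HasDerivAt (x i)
        ((N:ℝ) * (f ((N:ℝ) * (x i t - x (i-1) t)) - f ((N:ℝ) * (x (i+1) t - x i t)))) t)
    (hode_right : HasDerivAt (x N) ((N:ℝ) * f ((N:ℝ) * (x N t - x (N-1) t))) t)
    {i : ℕ} (hi : i ∈ range (N + 1)) :
    HasDerivAt (x i) (gapFlux N f (x · t) i - gapFlux N f (x · t) (i + 1)) t := by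
  rw [mem_range] at hi
  obtain rfl | hi_pos := Nat.eq_zero_or_pos i
  · rw [gapFlux_zero, gapFlux_of_mem_Icc (mem_Icc.mpr ⟨le_rfl, hN⟩)]
    convert hode_left using 1
    ring
  obtain rfl | hi_lt := (Nat.le_of_lt_succ hi).eq_or_lt
  · rw [gapFlux_succ_self, gapFlux_of_mem_Icc (mem_Icc.mpr ⟨hN, le_rfl⟩), sub_zero]
    exact hode_right
  · rw [gapFlux_of_mem_Icc (mem_Icc.mpr ⟨hi_pos, hi_lt.le⟩),
      gapFlux_of_mem_Icc (mem_Icc.mpr ⟨by omega, hi_lt⟩), Nat.succ_sub_one, ← mul_sub]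
    exact hode_int i hi_pos (by omega)

/-- For `v ≡ 0` the center of mass is conserved and the variance
`V_x(t) = (1/N) ∑ (x_i - x̄)²` is nondecreasing, with
`dV_x/dt = (2/N) ∑ f(ω_i) ω_i ≥ 0` where `ω_i = N(x_i - x_{i-1})`. -/
theorem center_of_mass_conserved_variance_nondecreasing
    (N : ℕ) (hN : 1 ≤ N)
    (f : ℝ → ℝ) (hf_nonneg : ∀ r, 0 ≤ f r)
    (x : ℕ → ℝ → ℝ)
    (horder : ∀ i, 1 ≤ i → i ≤ N → ∀ t : ℝ, x (i-1) t ≤ x i t)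
    (hode_left : ∀ t : ℝ,
      HasDerivAt (x 0) (-(N:ℝ) * f ((N:ℝ) * (x 1 t - x 0 t))) t)
    (hode_int : ∀ i, 1 ≤ i → i ≤ N - 1 → ∀ t : ℝ,
      HasDerivAt (x i)
        ((N:ℝ) * (f ((N:ℝ) * (x i t - x (i-1) t)) - f ((N:ℝ) * (x (i+1) t - x i t)))) t)
    (hode_right : ∀ t : ℝ,
      HasDerivAt (x N) ((N:ℝ) * f ((N:ℝ) * (x N t - x (N-1) t))) t) :
    -- the center of mass is constant in time
    (∀ s t : ℝ,
      (1 / ((N:ℝ) + 1)) * ∑ i ∈ Finset.range (N+1), x i s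
        = (1 / ((N:ℝ) + 1)) * ∑ i ∈ Finset.range (N+1), x i t) ∧
    -- the variance evolves by `(2/N) ∑ f(ω_i) ω_i ≥ 0`, hence is nondecreasing
    (∀ t : ℝ,
      HasDerivAt
        (fun τ => (1 / (N:ℝ)) * ∑ i ∈ Finset.range (N+1),
          (x i τ - (1 / ((N:ℝ) + 1)) * ∑ j ∈ Finset.range (N+1), x j τ)^2)
        ((2 / (N:ℝ)) * ∑ i ∈ Finset.Icc 1 N,
          f ((N:ℝ) * (x i t - x (i-1) t)) * ((N:ℝ) * (x i t - x (i-1) t))) t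
      ∧ 0 ≤ (2 / (N:ℝ)) * ∑ i ∈ Finset.Icc 1 N,
          f ((N:ℝ) * (x i t - x (i-1) t)) * ((N:ℝ) * (x i t - x (i-1) t))) ∧
    (∀ s t : ℝ, s ≤ t →
      (1 / (N:ℝ)) * ∑ i ∈ Finset.range (N+1),
          (x i s - (1 / ((N:ℝ) + 1)) * ∑ j ∈ Finset.range (N+1), x j s)^2
        ≤ (1 / (N:ℝ)) * ∑ i ∈ Finset.range (N+1),
          (x i t - (1 / ((N:ℝ) + 1)) * ∑ j ∈ Finset.range (N+1), x j t)^2) := by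
  have hx t i (hi : i ∈ range (N + 1)) :=
    hasDerivAt_gapFlux_sub hN (hode_left t) (fun i h1 h2 => hode_int i h1 h2 t) (hode_right t) hi
  have hsum t : HasDerivAt (fun τ => ∑ i ∈ range (N + 1), x i τ) 0 t := by
    simpa only [sum_range_gapFlux_sub] using HasDerivAt.fun_sum (hx t)
  have hvar t : HasDerivAt
      (fun τ => (1 / (N:ℝ)) * ∑ i ∈ range (N+1),
        (x i τ - (1 / ((N:ℝ) + 1)) * ∑ j ∈ range (N+1), x j τ)^2)
      ((2 / (N:ℝ)) * ∑ i ∈ Icc 1 N,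
        f ((N:ℝ) * (x i t - x (i-1) t)) * ((N:ℝ) * (x i t - x (i-1) t))) t := by
    have := (hasDerivAt_sum_sq_sub_mean _ x _ (1 / ((N:ℝ) + 1)) t (hx t)
      sum_range_gapFlux_sub).const_mul (1 / (N:ℝ))
    rwa [sum_range_mul_gapFlux_sub, ← mul_assoc, one_div_mul_eq_div] at this
  have hdiss t : 0 ≤ (2 / (N:ℝ)) * ∑ i ∈ Icc 1 N,
      f ((N:ℝ) * (x i t - x (i-1) t)) * ((N:ℝ) * (x i t - x (i-1) t)) := by
    refine mul_nonneg (by positivity) (sum_nonneg fun i hi => mul_nonneg (hf_nonneg _) ?_)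
    obtain ⟨hi1, hiN⟩ := mem_Icc.mp hi
    exact mul_nonneg N.cast_nonneg (sub_nonneg.mpr (horder i hi1 hiN t))
  have hconst := is_const_of_deriv_eq_zero (fun τ => (hsum τ).differentiableAt)
    (fun τ => (hsum τ).deriv)
  exact ⟨fun s t => by rw [hconst s t], fun t => ⟨hvar t, hdiss t⟩,
    fun _ _ hst => monotone_of_hasDerivAt_nonneg hvar hdiss hst⟩
end

section
/- Assume f Lipschitz with constant L_f, f bounded, v ∈ W^{2,∞}, and suppose TV(ω_{Δs}(·,0)) is bounded uniformly in Δs, with 0 ≤ ω_i(t) ≤ ω_max e^{γt}. Then along solutions of ω̇_i = (2f(ω_i) − f(ω_{i−1}) − f(ω_{i+1}))/Δs² + (v(x_i) − v(x_{i−1}))/Δs one has d/dt TV(ω_{Δs}(·,t)) ≤ γ TV(ω_{Δs}(·,t)) + c(t) with c(t) independent of Δs, and hence by Gronwall's inequality TV(ω_{Δs}(·,t)) is bounded uniformly in Δs on every finite time interval. -/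
/-!
Gronwall's inequality is applied not to `TV = ∑ |ω_{i+1} - ω_i|` but to `D = TV - ω_1 - ω_N`.
Write the diffusive part of `ω̇_j` as `N² (H_j - H_{j-1})` with `H_i = f(ω_i) - f(ω_{i+1})`
and `H_0 = -f(ω_1)`, `H_N = f(ω_N)`. The right derivative of `|ω_{i+1} - ω_i|` carries a sign
`σ_i` of `ω_{i+1} - ω_i`, and since `f` is antitone, `σ_i H_i = |H_i|`; hence the diffusive
contributions to `TV'` telescope to boundary terms of size `N²`, which are cancelled exactly by
those of `ω̇_1 + ω̇_N` because `H_0 ≤ 0 ≤ H_N`. A second-order Taylor expansion of `v` bounds the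
transport contributions by `γ TV + 3 γ₂ M²`, where `M = ω_max e^{γT}` bounds every `ω_i`.
-/

open scoped NNReal Topology
open Filter Set

theorem mul_le_abs_of_abs_le_one {σ x : ℝ} (hσ : |σ| ≤ 1) : σ * x ≤ |x| :=
  (le_abs_self _).trans (by rw [abs_mul]; exact mul_le_of_le_one_left (abs_nonneg x) hσ)

theorem lipschitzWith_of_abs_deriv_le {v : ℝ → ℝ} {C : ℝ≥0} (hv : Differentiable ℝ v)
    (h : ∀ y, |deriv v y| ≤ C) : LipschitzWith C v :=
  lipschitzWith_of_nnnorm_deriv_le hv fun y => by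
    rw [← NNReal.coe_le_coe, coe_nnnorm]; exact h y

theorem abs_sub_sub_deriv_mul_le {v : ℝ → ℝ} {K : ℝ≥0} (hv : Differentiable ℝ v)
    (hv' : LipschitzWith K (deriv v)) (a b : ℝ) :
    |v b - v a - deriv v a * (b - a)| ≤ K * (b - a) ^ 2 := by
  have hderiv : ∀ y ∈ uIcc a b,
      HasDerivWithinAt (fun y => v y - deriv v a * y) (deriv v y - deriv v a) (uIcc a b) y :=
    fun y _ => ((hv y).hasDerivAt.sub ((hasDerivAt_id y).const_mul _ |>.congr_deriv
      (mul_one _))).hasDerivWithinAt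
  have hbound : ∀ y ∈ uIcc a b, ‖deriv v y - deriv v a‖ ≤ K * |b - a| := fun y hy =>
    (hv'.dist_le_mul y a).trans (by
      gcongr; rw [Real.dist_eq]; exact abs_sub_left_of_mem_uIcc hy)
  have := (convex_uIcc a b).norm_image_sub_le_of_norm_hasDerivWithin_le hderiv hbound
    left_mem_uIcc right_mem_uIcc
  rw [Real.norm_eq_abs, Real.norm_eq_abs] at this
  calc |v b - v a - deriv v a * (b - a)| = |v b - deriv v a * b - (v a - deriv v a * a)| := by
        ring_nf
    _ ≤ K * |b - a| * |b - a| := this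
    _ = K * (b - a) ^ 2 := by rw [mul_assoc, ← sq, sq_abs]

theorem abs_sub_sub_sub_le {v : ℝ → ℝ} {γ K : ℝ≥0} (hv : Differentiable ℝ v)
    (hv₁ : ∀ y, |deriv v y| ≤ γ) (hv₂ : LipschitzWith K (deriv v)) (a b c : ℝ) :
    |(v c - v b) - (v b - v a)| ≤
      γ * |(c - b) - (b - a)| + K * ((c - b) ^ 2 + 2 * (b - a) ^ 2) := by
  have hslope : |deriv v b * ((c - b) - (b - a))| ≤ γ * |(c - b) - (b - a)| := by
    rw [abs_mul]; exact mul_le_mul_of_nonneg_right (hv₁ b) (abs_nonneg _)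
  have hcurv : |(deriv v b - deriv v a) * (b - a)| ≤ K * (b - a) ^ 2 := by
    calc |(deriv v b - deriv v a) * (b - a)| = dist (deriv v b) (deriv v a) * |b - a| := by
          rw [abs_mul, Real.dist_eq]
      _ ≤ K * |b - a| * |b - a| := by
          gcongr; simpa [Real.dist_eq] using hv₂.dist_le_mul b a
      _ = K * (b - a) ^ 2 := by rw [mul_assoc, ← sq, sq_abs]
  have key := abs_add_three (v c - v b - deriv v b * (c - b))
    (deriv v b * ((c - b) - (b - a)) + (deriv v b - deriv v a) * (b - a))
    (-(v b - v a - deriv v a * (b - a)))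
  rw [abs_neg] at key
  have := abs_add_le (deriv v b * ((c - b) - (b - a))) ((deriv v b - deriv v a) * (b - a))
  have := abs_sub_sub_deriv_mul_le hv hv₂ b c
  have := abs_sub_sub_deriv_mul_le hv hv₂ a b
  calc |(v c - v b) - (v b - v a)| = |(v c - v b - deriv v b * (c - b))
        + (deriv v b * ((c - b) - (b - a)) + (deriv v b - deriv v a) * (b - a))
        + -(v b - v a - deriv v a * (b - a))| := by ring_nf
    _ ≤ _ := by linarith

theorem HasDerivAt.hasDerivWithinAt_Ici_abs_of_eq_zero {g : ℝ → ℝ} {g' t : ℝ}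
    (hg : HasDerivAt g g' t) (h : g t = 0) :
    HasDerivWithinAt (fun z => |g z|) |g'| (Ici t) t := by
  rw [hasDerivWithinAt_iff_tendsto_slope, Ici_sdiff_left]
  have hslope := (hasDerivAt_iff_tendsto_slope.1 hg).mono_left
    (nhdsWithin_mono t fun z (hz : t < z) => hz.ne')
  refine hslope.abs.congr' (eventually_nhdsWithin_of_forall fun z (hz : t < z) => ?_)
  simp only [slope_def_field, h, abs_zero, sub_zero, abs_div, abs_of_pos (sub_pos.2 hz)]

theorem HasDerivAt.exists_hasDerivWithinAt_Ici_abs {g : ℝ → ℝ} {g' t : ℝ}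
    (hg : HasDerivAt g g' t) :
    ∃ σ : ℝ, (σ = 1 ∨ σ = -1) ∧ σ * g t = |g t| ∧
      HasDerivWithinAt (fun z => |g z|) (σ * g') (Ici t) t := by
  rcases lt_trichotomy (g t) 0 with hneg | hzero | hpos
  · exact ⟨-1, .inr rfl, by rw [abs_of_neg hneg]; ring,
      ((hasDerivAt_abs_neg hneg).comp t hg).hasDerivWithinAt⟩
  · have habs := hg.hasDerivWithinAt_Ici_abs_of_eq_zero hzero
    rcases le_total 0 g' with hg' | hg'
    · exact ⟨1, .inl rfl, by simp [hzero], by rwa [one_mul, ← abs_of_nonneg hg']⟩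
    · exact ⟨-1, .inr rfl, by simp [hzero], by rwa [neg_one_mul, ← abs_of_nonpos hg']⟩
  · exact ⟨1, .inl rfl, by rw [abs_of_pos hpos]; ring,
      ((hasDerivAt_abs_pos hpos).comp t hg).hasDerivWithinAt⟩

theorem AntitoneOn.sign_mul_sub_eq_abs {f : ℝ → ℝ} {s : Set ℝ} (hf : AntitoneOn f s)
    {a b σ : ℝ} (ha : a ∈ s) (hb : b ∈ s) (hσ : σ = 1 ∨ σ = -1) (h : σ * (b - a) = |b - a|) :
    σ * (f a - f b) = |f a - f b| := by
  rcases hσ with rfl | rfl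
  · have hab : a ≤ b := by linarith [abs_nonneg (b - a)]
    rw [one_mul, abs_of_nonneg (sub_nonneg.2 (hf ha hb hab))]
  · have hba : b ≤ a := by linarith [abs_nonneg (b - a)]
    rw [abs_of_nonpos (sub_nonpos.2 (hf hb ha hba))]; ring

theorem le_gronwallBound_of_hasDerivWithinAt_Ici {f : ℝ → ℝ} {δ K ε a b : ℝ}
    (hf : ContinuousOn f (Icc a b))
    (hf' : ∀ x ∈ Ico a b, ∃ f', HasDerivWithinAt f f' (Ici x) x ∧ f' ≤ K * f x + ε)
    (ha : f a ≤ δ) : ∀ x ∈ Icc a b, f x ≤ gronwallBound δ K ε (x - a) :=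
  le_gronwallBound_of_liminf_deriv_right_le (f' := fun x => K * f x + ε) hf
    (fun x hx _ hr => by
      obtain ⟨f', hd, hle⟩ := hf' x hx
      exact hd.liminf_right_slope_le (hle.trans_lt hr))
    ha fun _ _ => le_rfl

theorem sum_sign_mul_second_diff_le {N : ℕ} (hN : 2 ≤ N) {H σ : ℕ → ℝ}
    (hσ : ∀ i ∈ Finset.Icc 1 (N - 1), |σ i| ≤ 1 ∧ σ i * H i = |H i|)
    (hH₀ : H 0 ≤ 0) (hH_N : 0 ≤ H N) :
    ∑ i ∈ Finset.Icc 1 (N - 1), σ i * ((H (i + 1) - H i) - (H i - H (i - 1)))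
      ≤ (H 1 - H 0) + (H N - H (N - 1)) := by
  have hterm : ∀ i ∈ Finset.Icc 1 (N - 1), σ i * ((H (i + 1) - H i) - (H i - H (i - 1)))
      ≤ (|H (i + 1)| - |H i|) - (|H i| - |H (i - 1)|) := fun i hi => by
    obtain ⟨hσ₁, hσH⟩ := hσ i hi
    linarith [mul_le_abs_of_abs_le_one (x := H (i + 1)) hσ₁,
      mul_le_abs_of_abs_le_one (x := H (i - 1)) hσ₁]
  have hN₁ : N - 1 + 1 = N := by omega
  have hright := Finset.sum_Icc_sub (m := 1) (n := N - 1) (by omega) fun i => |H i|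
  have hleft := Finset.sum_Icc_sub (m := 1) (n := N - 1) (by omega) fun i => |H (i - 1)|
  simp only [hN₁, Nat.add_sub_cancel, Nat.sub_self] at hright hleft
  have hsum := Finset.sum_le_sum hterm
  rw [Finset.sum_sub_distrib, hright, hleft, abs_of_nonneg hH_N, abs_of_nonpos hH₀] at hsum
  linarith [neg_abs_le (H 1), le_abs_self (H (N - 1))]

namespace ParticleScheme

def discreteTV (N : ℕ) (w : ℕ → ℝ) : ℝ := ∑ i ∈ Finset.Icc 1 (N - 1), |w (i + 1) - w i|

def transport (v : ℝ → ℝ) (N : ℕ) (y : ℕ → ℝ) (j : ℕ) : ℝ := N * (v (y j) - v (y (j - 1)))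

/-- The boundary equations of the scheme are the interior one with `f = 0` in the ghost cells
`0` and `N + 1`. -/
def ghostExt (f : ℝ → ℝ) (N : ℕ) (w : ℕ → ℝ) (i : ℕ) : ℝ :=
  if i ∈ Finset.Icc 1 N then f (w i) else 0

def flux (f : ℝ → ℝ) (N : ℕ) (w : ℕ → ℝ) (i : ℕ) : ℝ :=
  ghostExt f N w i - ghostExt f N w (i + 1)

def rhs (f v : ℝ → ℝ) (N : ℕ) (w y : ℕ → ℝ) (j : ℕ) : ℝ :=
  N ^ 2 * (flux f N w j - flux f N w (j - 1)) + transport v N y j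

variable {f v : ℝ → ℝ} {γ K : ℝ≥0} {N : ℕ} {w y : ℕ → ℝ} {M : ℝ}

theorem flux_of_mem {i : ℕ} (hi : i ∈ Finset.Icc 1 (N - 1)) :
    flux f N w i = f (w i) - f (w (i + 1)) := by
  obtain ⟨hi₁, hi₂⟩ := Finset.mem_Icc.1 hi
  simp only [flux, ghostExt, Finset.mem_Icc]
  rw [if_pos ⟨hi₁, by omega⟩, if_pos ⟨by omega, by omega⟩]

theorem flux_zero (hN : 1 ≤ N) : flux f N w 0 = -f (w 1) := by
  simp [flux, ghostExt, hN]

theorem flux_self (hN : 1 ≤ N) : flux f N w N = f (w N) := by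
  simp [flux, ghostExt, hN]

theorem sum_sign_mul_flux_second_diff_le (hf : AntitoneOn f (Ici 0))
    (hf₀ : ∀ r, 0 ≤ r → 0 ≤ f r) (hN : 2 ≤ N) (hw : ∀ j ∈ Finset.Icc 1 N, 0 ≤ w j) {σ : ℕ → ℝ}
    (hσ : ∀ i ∈ Finset.Icc 1 (N - 1),
      (σ i = 1 ∨ σ i = -1) ∧ σ i * (w (i + 1) - w i) = |w (i + 1) - w i|) :
    ∑ i ∈ Finset.Icc 1 (N - 1),
        σ i * ((flux f N w (i + 1) - flux f N w i) - (flux f N w i - flux f N w (i - 1)))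
      ≤ (flux f N w 1 - flux f N w 0) + (flux f N w N - flux f N w (N - 1)) := by
  refine sum_sign_mul_second_diff_le hN (fun i hi => ⟨?_, ?_⟩) ?_ ?_
  · rcases (hσ i hi).1 with h | h <;> simp [h]
  · obtain ⟨hi₁, hi₂⟩ := Finset.mem_Icc.1 hi
    rw [flux_of_mem hi]
    exact hf.sign_mul_sub_eq_abs (hw i (Finset.mem_Icc.2 ⟨hi₁, by omega⟩))
      (hw (i + 1) (Finset.mem_Icc.2 ⟨by omega, by omega⟩)) (hσ i hi).1 (hσ i hi).2
  · rw [flux_zero (by omega), neg_nonpos]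
    exact hf₀ _ (hw 1 (Finset.mem_Icc.2 ⟨le_rfl, by omega⟩))
  · rw [flux_self (by omega)]
    exact hf₀ _ (hw N (Finset.mem_Icc.2 ⟨by omega, le_rfl⟩))

theorem abs_transport_le (hv : LipschitzWith γ v) {j : ℕ} (hgap : w j = N * (y j - y (j - 1)))
    (hw : 0 ≤ w j) : |transport v N y j| ≤ γ * w j := by
  have := hv.dist_le_mul (y j) (y (j - 1))
  rw [Real.dist_eq, Real.dist_eq] at this
  calc |transport v N y j| = N * |v (y j) - v (y (j - 1))| := by
        rw [transport, abs_mul, Nat.abs_cast]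
    _ ≤ N * (γ * |y j - y (j - 1)|) := by gcongr
    _ = γ * |w j| := by rw [hgap, abs_mul, Nat.abs_cast]; ring
    _ = γ * w j := by rw [abs_of_nonneg hw]

theorem abs_transport_succ_sub_le (hv : Differentiable ℝ v) (hv₁ : ∀ y, |deriv v y| ≤ γ)
    (hv₂ : LipschitzWith K (deriv v)) (hN : 0 < N) {i : ℕ}
    (hgap : w i = N * (y i - y (i - 1))) (hgap' : w (i + 1) = N * (y (i + 1) - y i)) :
    |transport v N y (i + 1) - transport v N y i|
      ≤ γ * |w (i + 1) - w i| + K * (w (i + 1) ^ 2 + 2 * w i ^ 2) / N := by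
  have hN' : (0 : ℝ) < N := Nat.cast_pos.2 hN
  calc |transport v N y (i + 1) - transport v N y i|
      = N * |(v (y (i + 1)) - v (y i)) - (v (y i) - v (y (i - 1)))| := by
        rw [transport, transport, Nat.add_sub_cancel, ← mul_sub, abs_mul, Nat.abs_cast]
    _ ≤ N * (γ * |(y (i + 1) - y i) - (y i - y (i - 1))|
          + K * ((y (i + 1) - y i) ^ 2 + 2 * (y i - y (i - 1)) ^ 2)) := by
        gcongr
        exact abs_sub_sub_sub_le hv hv₁ hv₂ _ _ _
    _ = γ * |w (i + 1) - w i| + K * (w (i + 1) ^ 2 + 2 * w i ^ 2) / N := by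
        rw [hgap, hgap', ← mul_sub, abs_mul, Nat.abs_cast]
        field_simp

theorem sum_sign_mul_transport_sub_le (hv : Differentiable ℝ v) (hv₁ : ∀ y, |deriv v y| ≤ γ)
    (hv₂ : LipschitzWith K (deriv v)) (hN : 0 < N)
    (hgap : ∀ j ∈ Finset.Icc 1 N, w j = N * (y j - y (j - 1)))
    (hw : ∀ j ∈ Finset.Icc 1 N, 0 ≤ w j ∧ w j ≤ M) {σ : ℕ → ℝ}
    (hσ : ∀ i ∈ Finset.Icc 1 (N - 1), |σ i| ≤ 1) :
    ∑ i ∈ Finset.Icc 1 (N - 1), σ i * (transport v N y (i + 1) - transport v N y i)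
      ≤ γ * discreteTV N w + 3 * K * M ^ 2 := by
  have hterm : ∀ i ∈ Finset.Icc 1 (N - 1),
      σ i * (transport v N y (i + 1) - transport v N y i)
        ≤ γ * |w (i + 1) - w i| + 3 * K * M ^ 2 / N := fun i hi => by
    obtain ⟨hi₁, hi₂⟩ := Finset.mem_Icc.1 hi
    have hmem : i ∈ Finset.Icc 1 N := Finset.mem_Icc.2 ⟨hi₁, by omega⟩
    have hmem' : i + 1 ∈ Finset.Icc 1 N := Finset.mem_Icc.2 ⟨by omega, by omega⟩
    have hsq : w (i + 1) ^ 2 + 2 * w i ^ 2 ≤ 3 * M ^ 2 := by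
      nlinarith [hw i hmem, hw (i + 1) hmem']
    calc σ i * (transport v N y (i + 1) - transport v N y i)
        ≤ |transport v N y (i + 1) - transport v N y i| := mul_le_abs_of_abs_le_one (hσ i hi)
      _ ≤ γ * |w (i + 1) - w i| + K * (w (i + 1) ^ 2 + 2 * w i ^ 2) / N :=
          abs_transport_succ_sub_le hv hv₁ hv₂ hN (hgap i hmem)
            (by simpa using hgap (i + 1) hmem')
      _ ≤ γ * |w (i + 1) - w i| + 3 * K * M ^ 2 / N := by
          rw [mul_assoc 3, mul_left_comm 3]
          gcongr
  have hcard : ((Finset.Icc 1 (N - 1)).card : ℝ) ≤ N := by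
    rw [Nat.card_Icc]; exact_mod_cast (by omega : N - 1 + 1 - 1 ≤ N)
  calc _ ≤ ∑ i ∈ Finset.Icc 1 (N - 1), (γ * |w (i + 1) - w i| + 3 * K * M ^ 2 / N) :=
        Finset.sum_le_sum hterm
    _ = γ * discreteTV N w + (Finset.Icc 1 (N - 1)).card * (3 * K * M ^ 2 / N) := by
        rw [Finset.sum_add_distrib, ← Finset.mul_sum, Finset.sum_const, nsmul_eq_mul, discreteTV]
    _ ≤ γ * discreteTV N w + N * (3 * K * M ^ 2 / N) := by gcongr
    _ = γ * discreteTV N w + 3 * K * M ^ 2 := by field_simp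

theorem sum_sign_mul_rhs_sub_le (hf : AntitoneOn f (Ici 0)) (hf₀ : ∀ r, 0 ≤ r → 0 ≤ f r)
    (hv : Differentiable ℝ v) (hv₁ : ∀ y, |deriv v y| ≤ γ) (hv₂ : LipschitzWith K (deriv v))
    (hN : 2 ≤ N) (hgap : ∀ j ∈ Finset.Icc 1 N, w j = N * (y j - y (j - 1)))
    (hw : ∀ j ∈ Finset.Icc 1 N, 0 ≤ w j ∧ w j ≤ M) {σ : ℕ → ℝ}
    (hσ : ∀ i ∈ Finset.Icc 1 (N - 1),
      (σ i = 1 ∨ σ i = -1) ∧ σ i * (w (i + 1) - w i) = |w (i + 1) - w i|) :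
    ∑ i ∈ Finset.Icc 1 (N - 1), σ i * (rhs f v N w y (i + 1) - rhs f v N w y i)
        - rhs f v N w y 1 - rhs f v N w y N
      ≤ γ * (discreteTV N w - w 1 - w N) + (3 * K * M ^ 2 + 4 * γ * M) := by
  have hσ₁ : ∀ i ∈ Finset.Icc 1 (N - 1), |σ i| ≤ 1 := fun i hi => by
    rcases (hσ i hi).1 with h | h <;> simp [h]
  have hmem₁ : 1 ∈ Finset.Icc 1 N := Finset.mem_Icc.2 ⟨le_rfl, by omega⟩
  have hmem_N : N ∈ Finset.Icc 1 N := Finset.mem_Icc.2 ⟨by omega, le_rfl⟩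
  have hdiff := sum_sign_mul_flux_second_diff_le hf hf₀ hN (fun j hj => (hw j hj).1) hσ
  have htransport := sum_sign_mul_transport_sub_le hv hv₁ hv₂ (by omega) hgap hw hσ₁
  have hv₀ := lipschitzWith_of_abs_deriv_le hv hv₁
  have hb₁ := abs_transport_le hv₀ (hgap 1 hmem₁) (hw 1 hmem₁).1
  have hb_N := abs_transport_le hv₀ (hgap N hmem_N) (hw N hmem_N).1
  have hsplit : ∑ i ∈ Finset.Icc 1 (N - 1), σ i * (rhs f v N w y (i + 1) - rhs f v N w y i)
      = N ^ 2 * ∑ i ∈ Finset.Icc 1 (N - 1),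
          σ i * ((flux f N w (i + 1) - flux f N w i) - (flux f N w i - flux f N w (i - 1)))
        + ∑ i ∈ Finset.Icc 1 (N - 1), σ i * (transport v N y (i + 1) - transport v N y i) := by
    rw [Finset.mul_sum, ← Finset.sum_add_distrib]
    refine Finset.sum_congr rfl fun i _ => ?_
    simp only [rhs, Nat.add_sub_cancel]
    ring
  have hrhs₁ : rhs f v N w y 1 = N ^ 2 * (flux f N w 1 - flux f N w 0) + transport v N y 1 := rfl
  have hdiff' := mul_le_mul_of_nonneg_left hdiff (by positivity : (0 : ℝ) ≤ N ^ 2)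
  have hγw₁ := mul_le_mul_of_nonneg_left (hw 1 hmem₁).2 γ.coe_nonneg
  have hγw_N := mul_le_mul_of_nonneg_left (hw N hmem_N).2 γ.coe_nonneg
  rw [hsplit, hrhs₁, rhs]
  linarith [abs_le.1 hb₁, abs_le.1 hb_N]

theorem hasDerivAt_rhs (hN : 2 ≤ N) {ω x : ℕ → ℝ → ℝ} {t : ℝ}
    (h₁ : HasDerivAt (ω 1)
      ((N:ℝ)^2 * (2 * f (ω 1 t) - f (ω 2 t)) + (N:ℝ) * (v (x 1 t) - v (x 0 t))) t)
    (hᵢ : ∀ i, 2 ≤ i → i ≤ N - 1 → HasDerivAt (ω i)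
      ((N:ℝ)^2 * (2 * f (ω i t) - f (ω (i-1) t) - f (ω (i+1) t))
        + (N:ℝ) * (v (x i t) - v (x (i-1) t))) t)
    (h_N : HasDerivAt (ω N)
      ((N:ℝ)^2 * (2 * f (ω N t) - f (ω (N-1) t)) + (N:ℝ) * (v (x N t) - v (x (N-1) t))) t) :
    ∀ j ∈ Finset.Icc 1 N, HasDerivAt (ω j) (rhs f v N (ω · t) (x · t) j) t := by
  intro j hj
  obtain ⟨hj₁, hj_N⟩ := Finset.mem_Icc.1 hj
  rcases hj₁.eq_or_lt with rfl | hj₁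
  · convert h₁ using 1
    rw [rhs, flux_of_mem (Finset.mem_Icc.2 ⟨le_rfl, by omega⟩), flux_zero (by omega)]
    simp only [transport, Nat.sub_self]; ring
  rcases hj_N.eq_or_lt with rfl | hj_N
  · convert h_N using 1
    rw [rhs, flux_self (by omega), flux_of_mem (Finset.mem_Icc.2 ⟨by omega, by omega⟩),
      Nat.sub_add_cancel (by omega)]
    simp only [transport]; ring
  · convert hᵢ j hj₁ (by omega) using 1
    rw [rhs, flux_of_mem (Finset.mem_Icc.2 ⟨by omega, by omega⟩),
      flux_of_mem (Finset.mem_Icc.2 ⟨by omega, by omega⟩), Nat.sub_add_cancel (by omega)]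
    simp only [transport]; ring

theorem exists_hasDerivWithinAt_Ici_discreteTV {ω : ℕ → ℝ → ℝ} {ω' : ℕ → ℝ} {t : ℝ}
    (h : ∀ j ∈ Finset.Icc 1 N, HasDerivAt (ω j) (ω' j) t) :
    ∃ σ : ℕ → ℝ, (∀ i ∈ Finset.Icc 1 (N - 1), (σ i = 1 ∨ σ i = -1) ∧
        σ i * (ω (i + 1) t - ω i t) = |ω (i + 1) t - ω i t|) ∧
      HasDerivWithinAt (fun s => discreteTV N (ω · s))
        (∑ i ∈ Finset.Icc 1 (N - 1), σ i * (ω' (i + 1) - ω' i)) (Ici t) t := by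
  have : ∀ i ∈ Finset.Icc 1 (N - 1), ∃ σ : ℝ, (σ = 1 ∨ σ = -1) ∧
      σ * (ω (i + 1) t - ω i t) = |ω (i + 1) t - ω i t| ∧
      HasDerivWithinAt (fun s => |ω (i + 1) s - ω i s|) (σ * (ω' (i + 1) - ω' i)) (Ici t) t :=
    fun i hi => by
      obtain ⟨hi₁, hi₂⟩ := Finset.mem_Icc.1 hi
      exact ((h (i + 1) (Finset.mem_Icc.2 ⟨by omega, by omega⟩)).sub
        (h i (Finset.mem_Icc.2 ⟨hi₁, by omega⟩))).exists_hasDerivWithinAt_Ici_abs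
  choose! σ hσ₁ hσ₂ hσ₃ using this
  exact ⟨σ, fun i hi => ⟨hσ₁ i hi, hσ₂ i hi⟩, HasDerivWithinAt.fun_sum hσ₃⟩

theorem discreteTV_le_gronwallBound (hf : AntitoneOn f (Ici 0)) (hf₀ : ∀ r, 0 ≤ r → 0 ≤ f r)
    (hv : Differentiable ℝ v) (hv₁ : ∀ y, |deriv v y| ≤ γ) (hv₂ : LipschitzWith K (deriv v))
    (hN : 2 ≤ N) {ω x : ℕ → ℝ → ℝ} {T B : ℝ}
    (hgap : ∀ j ∈ Finset.Icc 1 N, ∀ t, ω j t = N * (x j t - x (j - 1) t))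
    (hode : ∀ t ∈ Icc 0 T, ∀ j ∈ Finset.Icc 1 N,
      HasDerivAt (ω j) (rhs f v N (ω · t) (x · t) j) t)
    (hbnd : ∀ t ∈ Icc 0 T, ∀ j ∈ Finset.Icc 1 N, 0 ≤ ω j t ∧ ω j t ≤ M)
    (h₀ : discreteTV N (ω · 0) ≤ B) :
    ∀ t ∈ Icc 0 T,
      discreteTV N (ω · t) ≤ gronwallBound B γ (3 * K * M ^ 2 + 4 * γ * M) t + 2 * M := by
  intro t ht
  have hmem₁ : 1 ∈ Finset.Icc 1 N := Finset.mem_Icc.2 ⟨le_rfl, by omega⟩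
  have hmem_N : N ∈ Finset.Icc 1 N := Finset.mem_Icc.2 ⟨by omega, le_rfl⟩
  have hcont : ∀ j ∈ Finset.Icc 1 N, ContinuousOn (ω j) (Icc 0 T) := fun j hj s hs =>
    (hode s hs j hj).continuousAt.continuousWithinAt
  have hD_cont : ContinuousOn (fun s => discreteTV N (ω · s) - ω 1 s - ω N s) (Icc 0 T) := by
    refine ((continuousOn_finsetSum _ fun i hi => ?_).sub (hcont 1 hmem₁)).sub (hcont N hmem_N)
    obtain ⟨hi₁, hi₂⟩ := Finset.mem_Icc.1 hi
    exact ((hcont (i + 1) (Finset.mem_Icc.2 ⟨by omega, by omega⟩)).sub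
      (hcont i (Finset.mem_Icc.2 ⟨hi₁, by omega⟩))).abs
  have hD_deriv : ∀ s ∈ Ico 0 T, ∃ D', HasDerivWithinAt
      (fun s => discreteTV N (ω · s) - ω 1 s - ω N s) D' (Ici s) s ∧
      D' ≤ γ * (discreteTV N (ω · s) - ω 1 s - ω N s) + (3 * K * M ^ 2 + 4 * γ * M) := by
    intro s hs
    have hds := hode s (Ico_subset_Icc_self hs)
    obtain ⟨σ, hσ, hTV⟩ := exists_hasDerivWithinAt_Ici_discreteTV hds
    exact ⟨_, (hTV.sub (hds 1 hmem₁).hasDerivWithinAt).sub (hds N hmem_N).hasDerivWithinAt,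
      sum_sign_mul_rhs_sub_le hf hf₀ hv hv₁ hv₂ hN (fun j hj => hgap j hj s)
        (hbnd s (Ico_subset_Icc_self hs)) hσ⟩
  have h0 : (0 : ℝ) ∈ Icc 0 T := ⟨le_rfl, ht.1.trans ht.2⟩
  have hD₀ : discreteTV N (ω · 0) - ω 1 0 - ω N 0 ≤ B := by
    linarith [(hbnd 0 h0 1 hmem₁).1, (hbnd 0 h0 N hmem_N).1]
  have hD := le_gronwallBound_of_hasDerivWithinAt_Ici hD_cont hD_deriv hD₀ t ht
  rw [sub_zero] at hD
  linarith [(hbnd t ht 1 hmem₁).2, (hbnd t ht N hmem_N).2]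

end ParticleScheme

open ParticleScheme

theorem tv_uniform_bound_general
    (f v : ℝ → ℝ) (γ γ₂ : ℝ≥0)
    (hf_anti : AntitoneOn f (Set.Ici 0))
    (hf_range : ∀ r : ℝ, 0 ≤ r → f r ∈ Set.Icc (0:ℝ) 1)
    (hv : ContDiff ℝ 2 v)
    (hv1 : ∀ y : ℝ, |deriv v y| ≤ (γ : ℝ))
    (hv2 : ∀ y : ℝ, |deriv (deriv v) y| ≤ (γ₂ : ℝ))
    (B ωmax : ℝ) (hB : 0 ≤ B) (hωmax : 0 ≤ ωmax) :
    ∀ T : ℝ, 0 < T → ∃ C : ℝ,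
      ∀ N : ℕ, 2 ≤ N →
      ∀ ω x : ℕ → ℝ → ℝ,
      -- the gap relation x_i - x_{i-1} = Δs · ω_i
      (∀ i ∈ Finset.Icc 1 N, ∀ t : ℝ, ω i t = (N:ℝ) * (x i t - x (i-1) t)) →
      -- the ODE system
      (∀ t : ℝ, 0 ≤ t →
        HasDerivAt (ω 1)
          ((N:ℝ)^2 * (2 * f (ω 1 t) - f (ω 2 t))
            + (N:ℝ) * (v (x 1 t) - v (x 0 t))) t) →
      (∀ i, 2 ≤ i → i ≤ N - 1 → ∀ t : ℝ, 0 ≤ t →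
        HasDerivAt (ω i)
          ((N:ℝ)^2 * (2 * f (ω i t) - f (ω (i-1) t) - f (ω (i+1) t))
            + (N:ℝ) * (v (x i t) - v (x (i-1) t))) t) →
      (∀ t : ℝ, 0 ≤ t →
        HasDerivAt (ω N)
          ((N:ℝ)^2 * (2 * f (ω N t) - f (ω (N-1) t))
            + (N:ℝ) * (v (x N t) - v (x (N-1) t))) t) →
      -- a priori bounds from the maximum principle
      (∀ i ∈ Finset.Icc 1 N, ∀ t : ℝ, 0 ≤ t →
        0 ≤ ω i t ∧ ω i t ≤ ωmax * Real.exp ((γ:ℝ) * t)) →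
      -- uniformly bounded initial total variation
      (∑ i ∈ Finset.Icc 1 (N-1), |ω (i+1) 0 - ω i 0| ≤ B) →
      ∀ t : ℝ, 0 ≤ t → t ≤ T →
        ∑ i ∈ Finset.Icc 1 (N-1), |ω (i+1) t - ω i t| ≤ C := by
  intro T _
  set M := ωmax * Real.exp (γ * T)
  have hM : 0 ≤ M := by positivity
  refine ⟨gronwallBound B γ (3 * γ₂ * M ^ 2 + 4 * γ * M) T + 2 * M, ?_⟩
  intro N hN ω x hgap hode₁ hode hode_N hbnd hTV₀ t ht htT
  have hv' : Differentiable ℝ (deriv v) := (hv.iterate_deriv' 1 1).differentiable one_ne_zero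
  have hbnd' : ∀ s ∈ Icc 0 T, ∀ j ∈ Finset.Icc 1 N, 0 ≤ ω j s ∧ ω j s ≤ M := fun s hs j hj =>
    ⟨(hbnd j hj s hs.1).1, (hbnd j hj s hs.1).2.trans
      (mul_le_mul_of_nonneg_left (Real.exp_le_exp.2 (by gcongr; exact hs.2)) hωmax)⟩
  have hTV := discreteTV_le_gronwallBound hf_anti (fun r hr => (hf_range r hr).1)
    (hv.differentiable two_ne_zero) hv1 (lipschitzWith_of_abs_deriv_le hv' hv2) hN hgap
    (fun s hs => hasDerivAt_rhs hN (hode₁ s hs.1) (fun i h₂ h₃ => hode i h₂ h₃ s hs.1)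
      (hode_N s hs.1)) hbnd' hTV₀ t ⟨ht, htT⟩
  have hmono := gronwallBound_mono hB
    (by positivity : (0 : ℝ) ≤ 3 * γ₂ * M ^ 2 + 4 * γ * M) γ.coe_nonneg htT
  exact hTV.trans (by linarith)

/-- Uniform-in-`Δs` total variation bound: under the Gronwall estimate
`d/dt TV(ω_Δs) ≤ γ TV(ω_Δs) + c(t)` with `c` independent of `Δs = 1/N`, the discrete total
variation `TV(ω_Δs(·,t)) = ∑_{i=1}^{N-1} |ω_{i+1}(t) - ω_i(t)|` of solutions of
`ω̇_i = (2f(ω_i) - f(ω_{i-1}) - f(ω_{i+1}))/Δs² + (v(x_i) - v(x_{i-1}))/Δs`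
is bounded uniformly in `Δs` on every finite time interval. -/
theorem tv_uniform_bound
    (f v : ℝ → ℝ) (Lf γ γ₂ : ℝ≥0)
    (hf_lip : LipschitzWith Lf f)
    (hf_anti : AntitoneOn f (Set.Ici 0))
    (hf_range : ∀ r : ℝ, 0 ≤ r → f r ∈ Set.Icc (0:ℝ) 1)
    (hf_supp : ∀ r : ℝ, 1 ≤ r → f r = 0)
    (hv : ContDiff ℝ 2 v)
    (hv1 : ∀ y : ℝ, |deriv v y| ≤ (γ : ℝ))
    (hv2 : ∀ y : ℝ, |deriv (deriv v) y| ≤ (γ₂ : ℝ))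
    (B ωmax : ℝ) (hB : 0 ≤ B) (hωmax : 0 ≤ ωmax) :
    ∀ T : ℝ, 0 < T → ∃ C : ℝ,
      ∀ N : ℕ, 2 ≤ N →
      ∀ ω x : ℕ → ℝ → ℝ,
      -- the gap relation x_i - x_{i-1} = Δs · ω_i
      (∀ i ∈ Finset.Icc 1 N, ∀ t : ℝ, ω i t = (N:ℝ) * (x i t - x (i-1) t)) →
      -- the ODE system
      (∀ t : ℝ, 0 ≤ t →
        HasDerivAt (ω 1)
          ((N:ℝ)^2 * (2 * f (ω 1 t) - f (ω 2 t))
            + (N:ℝ) * (v (x 1 t) - v (x 0 t))) t) →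
      (∀ i, 2 ≤ i → i ≤ N - 1 → ∀ t : ℝ, 0 ≤ t →
        HasDerivAt (ω i)
          ((N:ℝ)^2 * (2 * f (ω i t) - f (ω (i-1) t) - f (ω (i+1) t))
            + (N:ℝ) * (v (x i t) - v (x (i-1) t))) t) →
      (∀ t : ℝ, 0 ≤ t →
        HasDerivAt (ω N)
          ((N:ℝ)^2 * (2 * f (ω N t) - f (ω (N-1) t))
            + (N:ℝ) * (v (x N t) - v (x (N-1) t))) t) →
      -- a priori bounds from the maximum principle
      (∀ i ∈ Finset.Icc 1 N, ∀ t : ℝ, 0 ≤ t →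
        0 ≤ ω i t ∧ ω i t ≤ ωmax * Real.exp ((γ:ℝ) * t)) →
      -- uniformly bounded initial total variation
      (∑ i ∈ Finset.Icc 1 (N-1), |ω (i+1) 0 - ω i 0| ≤ B) →
      ∀ t : ℝ, 0 ≤ t → t ≤ T →
        ∑ i ∈ Finset.Icc 1 (N-1), |ω (i+1) t - ω i t| ≤ C :=
  tv_uniform_bound_general f v γ γ₂ hf_anti hf_range hv hv1 hv2 B ωmax hB hωmax
end
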